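/- Let d ≥ 1, let τ : ℤ^d → ℤ be a shift, and let N be a positive integer. For every edge {u,v} ∈ E(ℤ^d), |τ^rough_N(Nu) − τ^rough_N(Nv)| ≤ N^{−(d−1)}·TV(τ; Q_N(Nu) ∪ Q_N(Nv)). -/

import Mathlib

namespace DF

/-- The base lattice `ℤ^d`. -/
abbrev Base (d : ℕ) := Fin d → ℤ

/-- ℓ¹ distance on the base lattice. -/
def dist1 {d : ℕ} (u v : Base d) : ℤ := ∑ i, |u i - v i|

/-- Nearest-neighbour adjacency on the base lattice. -/
def baseAdj {d : ℕ} (u v : Base d) : Prop := dist1 u v = 1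

/-- Edges of the base lattice `ℤ^d`: unordered pairs at ℓ¹-distance 1. -/
def IsBaseEdge {d : ℕ} (e : Sym2 (Base d)) : Prop :=
  ∃ u v : Base d, baseAdj u v ∧ e = s(u, v)

/-- `|τ u − τ v|` over an unordered pair. -/
def pairAbsDiff {d : ℕ} (τ : Base d → ℤ) : Sym2 (Base d) → ℤ :=
  Sym2.lift ⟨fun u v => |τ u - τ v|, fun _ _ => abs_sub_comm _ _⟩

/-- A shift: a finitely supported `τ : ℤ^d → ℤ`. -/
def IsShift {d : ℕ} (τ : Base d → ℤ) : Prop := {v | τ v ≠ 0}.Finite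

/-- Total variation of a shift: the sum of `|τ u − τ v|` over all edges. -/
noncomputable def TV {d : ℕ} (τ : Base d → ℤ) : ℤ :=
  ∑ᶠ e ∈ {e : Sym2 (Base d) | IsBaseEdge e}, pairAbsDiff τ e

/-- Total variation of `τ` restricted to edges with both endpoints in `A`. -/
noncomputable def TVon {d : ℕ} (τ : Base d → ℤ) (A : Set (Base d)) : ℤ :=
  ∑ᶠ e ∈ {e : Sym2 (Base d) | IsBaseEdge e ∧ ∀ x ∈ e, x ∈ A}, pairAbsDiff τ e

/-- The discrete cube `Q_N(c) = c + {0,1,…,N−1}^d` as a finset. -/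
noncomputable def cubeFinset {d : ℕ} (N : ℕ) (c : Base d) : Finset (Base d) :=
  Fintype.piFinset fun i => Finset.Ico (c i) (c i + (N : ℤ))

/-- The base point `N·⌊u/N⌋` of the cube of side `N` containing `u`. -/
def cubePt {d : ℕ} (N : ℕ) (u : Base d) : Base d := fun i => N * Int.fdiv (u i) N

/-- The average `τ^rough_N(u)` of `τ` over the cube of the partition `𝒫_N`
containing `u`. -/
noncomputable def roughAvg {d : ℕ} (N : ℕ) (τ : Base d → ℤ) (u : Base d) : ℝ :=
  (∑ w ∈ cubeFinset N (cubePt N u), (τ w : ℝ)) / (N : ℝ) ^ d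

/-- The integer nearest to `a`, with the convention `[k + 1/2] = k`. -/
noncomputable def nearestInt (a : ℝ) : ℤ := ⌈a - 1 / 2⌉

/-- The coarse graining `τ_N`. -/
noncomputable def coarse {d : ℕ} (N : ℕ) (τ : Base d → ℤ) (u : Base d) : ℤ :=
  nearestInt (roughAvg N τ u)

end DF

open DF

/-! Translation by `N e_j` maps the cube `Q_N(Nu)` onto `Q_N(Nv)`, so the difference of the two
cube sums is `∑_w (τ w - τ (w + N e_j))`. Each term telescopes along the `N` unit edges from `w`
to `w + N e_j`, all inside `Q_N(Nu) ∪ Q_N(Nv)`, and for a fixed step `k` these edges are distinct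
as `w` ranges over `Q_N(Nu)`. Hence the difference is at most `N · TV`, and dividing by `N^d`
gives the bound. -/

open Finset

lemma exists_eq_single_of_sum_abs_eq_one {ι : Type*} [Fintype ι] [DecidableEq ι] {x : ι → ℤ}
    (hx : ∑ i, |x i| = 1) : ∃ j, x = Pi.single j 1 ∨ x = Pi.single j (-1) := by
  obtain ⟨j, -, hj⟩ := exists_ne_zero_of_sum_ne_zero (hx ▸ one_ne_zero)
  have hsplit := add_sum_erase univ (fun i => |x i|) (mem_univ j)
  have hrest_nonneg : 0 ≤ ∑ i ∈ univ.erase j, |x i| := sum_nonneg fun i _ => abs_nonneg _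
  have hxj : |x j| = 1 := by linarith [Int.one_le_abs (abs_ne_zero.1 hj)]
  have hrest : ∀ i ≠ j, x i = 0 := fun i hij => abs_eq_zero.1 <|
    (sum_eq_zero_iff_of_nonneg fun i _ => abs_nonneg (x i)).1 (by linarith) i
      (mem_erase.2 ⟨hij, mem_univ i⟩)
  have hx_single : x = Pi.single j (x j) := funext fun i => by
    rcases eq_or_ne i j with rfl | hij
    · simp
    · simp [hij, hrest i hij]
  rcases abs_eq zero_le_one |>.1 hxj with h | h <;> rw [h] at hx_single
  exacts [⟨j, .inl hx_single⟩, ⟨j, .inr hx_single⟩]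

lemma abs_div_pow_sub_div_pow_le {a b t : ℝ} {N d : ℕ} (hd : 1 ≤ d) (ht : 0 ≤ t)
    (h : |a - b| ≤ N * t) : |a / N ^ d - b / N ^ d| ≤ t / N ^ (d - 1) := by
  obtain ⟨d, rfl⟩ : ∃ d', d = d' + 1 := ⟨d - 1, by omega⟩
  rcases N.eq_zero_or_pos with rfl | hN
  · simpa using div_nonneg ht (pow_nonneg le_rfl _)
  have hN : (0 : ℝ) < N := by exact_mod_cast hN
  rw [← sub_div, abs_div, abs_of_pos (by positivity : (0 : ℝ) < N ^ (d + 1)),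
    Nat.add_sub_cancel, pow_succ', ← mul_div_mul_left t _ hN.ne']
  exact div_le_div_of_nonneg_right h (by positivity)

namespace DF

variable {d : ℕ}

lemma mem_cubeFinset {N : ℕ} {c x : Base d} :
    x ∈ cubeFinset N c ↔ ∀ i, c i ≤ x i ∧ x i < c i + N := by
  simp only [cubeFinset, Fintype.mem_piFinset, mem_Ico]

lemma sum_cubeFinset_add {M : Type*} [AddCommMonoid M] (N : ℕ) (c t : Base d)
    (f : Base d → M) :
    ∑ w ∈ cubeFinset N (c + t), f w = ∑ w ∈ cubeFinset N c, f (w + t) := by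
  refine (sum_nbij' (· + t) (· - t) ?_ ?_ ?_ ?_ fun _ _ => rfl).symm <;>
    simp only [mem_cubeFinset, Pi.add_apply, Pi.sub_apply, add_sub_cancel_right,
      sub_add_cancel, implies_true]
  · exact fun w hw i => ⟨by linarith [(hw i).1], by linarith [(hw i).2]⟩
  · exact fun w hw i => ⟨by linarith [(hw i).1], by linarith [(hw i).2]⟩

lemma cubePt_mul (N : ℕ) (u : Base d) :
    cubePt N (fun i => (N : ℤ) * u i) = fun i => (N : ℤ) * u i := by
  funext i
  rcases eq_or_ne (N : ℤ) 0 with hN | hN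
  · simp [cubePt, hN]
  · simp [cubePt, Int.mul_fdiv_cancel_left _ hN]

lemma pairAbsDiff_nonneg (τ : Base d → ℤ) (e : Sym2 (Base d)) : 0 ≤ pairAbsDiff τ e := by
  induction e using Sym2.ind with
  | _ a b => exact abs_nonneg _

lemma TVon_nonneg (τ : Base d → ℤ) (A : Set (Base d)) : 0 ≤ TVon τ A :=
  finsum_nonneg fun e => finsum_nonneg fun _ => pairAbsDiff_nonneg τ e

lemma baseAdj_add_single (x : Base d) (j : Fin d) : baseAdj x (x + Pi.single j 1) := by
  simp [baseAdj, dist1, Pi.single_apply, apply_ite]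

lemma exists_eq_add_single_of_baseAdj {u v : Base d} (huv : baseAdj u v) :
    ∃ j, v = u + Pi.single j 1 ∨ u = v + Pi.single j 1 := by
  have hsum : ∑ i, |(v - u) i| = 1 := by
    simpa [baseAdj, dist1, abs_sub_comm] using huv
  obtain ⟨j, h | h⟩ := exists_eq_single_of_sum_abs_eq_one hsum
  · exact ⟨j, .inl (by rw [← h]; abel)⟩
  · refine ⟨j, .inr ?_⟩
    rw [← neg_neg (Pi.single j 1 : Base d), ← Pi.single_neg, ← h]
    abel

lemma sum_comp_le_TVon {ι : Type*} (τ : Base d → ℤ) (S : Finset (Base d)) {s : Finset ι}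
    {φ : ι → Sym2 (Base d)} (hφ : Set.InjOn φ s) (hedge : ∀ i ∈ s, IsBaseEdge (φ i))
    (hmem : ∀ i ∈ s, φ i ∈ S.sym2) :
    ∑ i ∈ s, pairAbsDiff τ (φ i) ≤ TVon τ S := by
  classical
  have hfin : {e : Sym2 (Base d) | IsBaseEdge e ∧ ∀ x ∈ e, x ∈ (S : Set (Base d))}.Finite :=
    S.sym2.finite_toSet.subset fun e he => mem_sym2_iff.2 he.2
  rw [TVon, finsum_mem_eq_finite_toFinset_sum _ hfin, ← sum_image hφ]
  refine sum_le_sum_of_subset_of_nonneg (fun e he => ?_) fun e _ _ => pairAbsDiff_nonneg τ e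
  obtain ⟨i, hi, rfl⟩ := mem_image.1 he
  exact hfin.mem_toFinset.2 ⟨hedge i hi, mem_sym2_iff.1 (hmem i hi)⟩

lemma add_single_mem_cubeFinset_union {N : ℕ} {c w : Base d} (hw : w ∈ cubeFinset N c)
    (j : Fin d) {k : ℤ} (hk₀ : 0 ≤ k) (hkN : k ≤ N) :
    w + Pi.single j k ∈ cubeFinset N c ∪ cubeFinset N (c + Pi.single j (N : ℤ)) := by
  rw [mem_cubeFinset] at hw
  rw [mem_union, mem_cubeFinset, mem_cubeFinset]
  by_cases hj : w j + k < c j + N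
  · left
    intro i
    rcases eq_or_ne i j with rfl | hij
    · simp only [Pi.add_apply, Pi.single_eq_same]
      exact ⟨by linarith [(hw i).1], hj⟩
    · simpa [hij] using hw i
  · right
    intro i
    rcases eq_or_ne i j with rfl | hij
    · simp only [Pi.add_apply, Pi.single_eq_same]
      exact ⟨by linarith, by linarith [(hw i).2]⟩
    · simpa [hij] using hw i

lemma sum_abs_sub_add_single_le_TVon (τ : Base d → ℤ) {N k : ℕ} (hk : k < N) (c : Base d)
    (j : Fin d) :
    ∑ w ∈ cubeFinset N c,
        |τ (w + Pi.single j (k : ℤ)) - τ (w + Pi.single j ((k : ℤ) + 1))| ≤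
      TVon τ ↑(cubeFinset N c ∪ cubeFinset N (c + Pi.single j (N : ℤ))) := by
  set φ : Base d → Sym2 (Base d) :=
    fun w => s(w + Pi.single j (k : ℤ), w + Pi.single j ((k : ℤ) + 1))
  have hinj : Set.InjOn φ ↑(cubeFinset N c) := by
    intro w _ w' _ h
    rcases Sym2.eq_iff.1 h with ⟨h, -⟩ | ⟨h₁, h₂⟩
    · exact add_right_cancel h
    · have h₁ := congrFun h₁ j
      have h₂ := congrFun h₂ j
      simp only [Pi.add_apply, Pi.single_eq_same] at h₁ h₂
      omega
  have hedge : ∀ w ∈ cubeFinset N c, IsBaseEdge (φ w) := fun w _ =>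
    ⟨_, _, by rw [Pi.single_add, ← add_assoc]; exact baseAdj_add_single _ j, rfl⟩
  have hkN : (k : ℤ) + 1 ≤ N := by exact_mod_cast hk
  have hmem : ∀ w ∈ cubeFinset N c,
      φ w ∈ (cubeFinset N c ∪ cubeFinset N (c + Pi.single j (N : ℤ))).sym2 :=
    fun w hw => mk_mem_sym2_iff.2
      ⟨add_single_mem_cubeFinset_union hw j (by positivity) (by omega),
        add_single_mem_cubeFinset_union hw j (by positivity) hkN⟩
  exact sum_comp_le_TVon τ _ hinj hedge hmem

theorem abs_sum_cubeFinset_sub_sum_cubeFinset_add_single_le (τ : Base d → ℤ) (N : ℕ)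
    (c : Base d) (j : Fin d) :
    |∑ w ∈ cubeFinset N c, τ w - ∑ w ∈ cubeFinset N (c + Pi.single j (N : ℤ)), τ w| ≤
      N * TVon τ ↑(cubeFinset N c ∪ cubeFinset N (c + Pi.single j (N : ℤ))) := by
  have htelescope : ∀ w : Base d, τ w - τ (w + Pi.single j (N : ℤ)) =
      ∑ k ∈ range N, (τ (w + Pi.single j (k : ℤ)) - τ (w + Pi.single j ((k : ℤ) + 1))) :=
    fun w => by
      have := sum_range_sub' (fun k : ℕ => τ (w + Pi.single j (k : ℤ))) N
      push_cast at this
      simpa using this.symm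
  rw [sum_cubeFinset_add, ← sum_sub_distrib]
  calc |∑ w ∈ cubeFinset N c, (τ w - τ (w + Pi.single j (N : ℤ)))|
      ≤ ∑ w ∈ cubeFinset N c, ∑ k ∈ range N,
          |τ (w + Pi.single j (k : ℤ)) - τ (w + Pi.single j ((k : ℤ) + 1))| :=
        (abs_sum_le_sum_abs _ _).trans <| sum_le_sum fun w _ =>
          htelescope w ▸ abs_sum_le_sum_abs _ _
    _ ≤ ∑ _k ∈ range N,
          TVon τ ↑(cubeFinset N c ∪ cubeFinset N (c + Pi.single j (N : ℤ))) := by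
        rw [sum_comm]
        exact sum_le_sum fun k hk => sum_abs_sub_add_single_le_TVon τ (mem_range.1 hk) c j
    _ = N * TVon τ ↑(cubeFinset N c ∪ cubeFinset N (c + Pi.single j (N : ℤ))) := by simp

lemma mul_add_single_one (N : ℕ) (u : Base d) (j : Fin d) :
    (fun i => (N : ℤ) * (u + Pi.single j 1 : Base d) i) =
      (fun i => (N : ℤ) * u i) + Pi.single j (N : ℤ) := by
  funext i
  rcases eq_or_ne i j with rfl | hij
  · simp [mul_add]
  · simp [hij]

theorem abs_roughAvg_sub_roughAvg_add_single_le (τ : Base d → ℤ) (N : ℕ) (u : Base d)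
    (j : Fin d) :
    |roughAvg N τ (fun i => (N : ℤ) * u i) -
        roughAvg N τ (fun i => (N : ℤ) * (u + Pi.single j 1 : Base d) i)| ≤
      (TVon τ ((cubeFinset N (fun i => (N : ℤ) * u i) : Set (Base d)) ∪
          (cubeFinset N (fun i => (N : ℤ) * (u + Pi.single j 1 : Base d) i) :
            Set (Base d))) : ℝ) /
        (N : ℝ) ^ (d - 1) := by
  rw [roughAvg, roughAvg, cubePt_mul, cubePt_mul, mul_add_single_one, ← Finset.coe_union]
  refine abs_div_pow_sub_div_pow_le j.pos (by exact_mod_cast TVon_nonneg _ _) ?_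
  exact_mod_cast abs_sum_cubeFinset_sub_sum_cubeFinset_add_single_le τ N _ j

end DF

theorem rough_average_lipschitz_bound_general
    (d : ℕ) (τ : Base d → ℤ) (N : ℕ)
    (u v : Base d) (huv : baseAdj u v) :
    |roughAvg N τ (fun i => (N : ℤ) * u i) - roughAvg N τ (fun i => (N : ℤ) * v i)| ≤
      (TVon τ ((cubeFinset N (fun i => (N : ℤ) * u i) : Set (Base d)) ∪
          (cubeFinset N (fun i => (N : ℤ) * v i) : Set (Base d))) : ℝ) /
        (N : ℝ) ^ (d - 1) := by
  obtain ⟨j, rfl | rfl⟩ := exists_eq_add_single_of_baseAdj huv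
  · exact abs_roughAvg_sub_roughAvg_add_single_le τ N u j
  · rw [abs_sub_comm, Set.union_comm]
    exact abs_roughAvg_sub_roughAvg_add_single_le τ N v j

/-- For every shift `τ`, positive integer `N` and edge `{u,v}` of
`ℤ^d`, `|τ^rough_N(Nu) − τ^rough_N(Nv)| ≤ N^{−(d−1)} TV(τ; Q_N(Nu) ∪ Q_N(Nv))`. -/
theorem rough_average_lipschitz_bound
    (d : ℕ) (hd : 1 ≤ d) (τ : Base d → ℤ) (hτ : IsShift τ) (N : ℕ) (hN : 0 < N)
    (u v : Base d) (huv : baseAdj u v) :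
    |roughAvg N τ (fun i => (N : ℤ) * u i) - roughAvg N τ (fun i => (N : ℤ) * v i)| ≤
      (TVon τ ((cubeFinset N (fun i => (N : ℤ) * u i) : Set (Base d)) ∪
          (cubeFinset N (fun i => (N : ℤ) * v i) : Set (Base d))) : ℝ) /
        (N : ℝ) ^ (d - 1) :=
  rough_average_lipschitz_bound_general d τ N u v huv
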